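/- Let Re β ≥ 0, h ∈ ℂ, and let z ∈ ℂ be such that z⁻¹ lies neither in the spectrum of e^{−βh}L↑_β nor in the spectrum of e^{βh}L↓_β (as bounded operators on H^∞(Π)). Then the following factorisation holds on H^∞(Π): 1 − zL_{β,h} = [1 − ze^{βh}L↓_β]·[1 − M↓_{β,ze^{βh}}M↑_{β,ze^{−βh}}]·[1 − ze^{−βh}L↑_β]. -/

import Mathlib

open Complex BoundedContinuousFunction
open scoped ENNReal

/-- The open right half-plane `Π = {z : ℂ | 0 < Re z}`. -/
def RHP : Set ℂ := {z : ℂ | 0 < z.re}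

/-- Extension of a bounded continuous function on `Π` to `ℂ` (by zero off `Π`). -/
noncomputable def extFun (f : ↥RHP →ᵇ ℂ) : ℂ → ℂ :=
  fun z => if h : 0 < z.re then f ⟨z, h⟩ else 0

/-- `H^∞(Π)`: the space of bounded holomorphic functions on `Π`, realised as the
submodule of the Banach space of bounded continuous functions on `Π` (with the
supremum norm) consisting of the holomorphic ones. -/
noncomputable def Hinf : Submodule ℂ (↥RHP →ᵇ ℂ) where
  carrier := {f | DifferentiableOn ℂ (extFun f) RHP}
  add_mem' := by
    intro f g hf hg
    refine (DifferentiableOn.add hf hg).congr (fun z hz => ?_)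
    have hz' : 0 < z.re := hz
    simp only [extFun]
    simp only [Pi.add_apply, extFun, dif_pos hz']
    rfl
  zero_mem' := by
    refine (differentiableOn_const 0).congr (fun z hz => ?_)
    have hz' : 0 < z.re := hz
    simp only [extFun]
    rw [dif_pos hz']
    rfl
  smul_mem' := by
    intro c f hf
    refine (hf.const_smul c).congr (fun z hz => ?_)
    have hz' : 0 < z.re := hz
    simp only [extFun]
    simp only [Pi.smul_apply, extFun, dif_pos hz']
    rfl

lemma mem_shift (z : ↥RHP) : (1 : ℂ) + z.1 ∈ RHP := by
  have hz := z.2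
  simp only [RHP, Set.mem_setOf_eq, Complex.add_re, Complex.one_re] at *
  linarith

lemma mem_div (z : ↥RHP) : z.1 / (1 + z.1) ∈ RHP := by
  have hz := z.2
  simp only [RHP, Set.mem_setOf_eq] at hz ⊢
  have hw : (1 + z.1) ≠ 0 := by
    intro h
    have h2 : (1 + z.1).re = 0 := by rw [h]; simp
    simp only [Complex.add_re, Complex.one_re] at h2
    linarith
  have hns : 0 < Complex.normSq (1 + z.1) := Complex.normSq_pos.mpr hw
  rw [Complex.div_re]
  have h1 : 0 < z.1.re * (1 + z.1).re := by
    simp only [Complex.add_re, Complex.one_re]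
    nlinarith
  have h2 : 0 ≤ z.1.im * (1 + z.1).im := by
    simp only [Complex.add_im, Complex.one_im, zero_add]
    nlinarith [sq_nonneg z.1.im]
  have := div_pos h1 hns
  have := div_nonneg h2 hns.le
  linarith

/-- Pointwise characterisation of the transfer operator
`(L↑_β f)(z) = (1+z)^(-2β) f(z/(1+z))` on `H^∞(Π)` (principal branch power). -/
def IsLup (β : ℂ) (T : ↥Hinf →L[ℂ] ↥Hinf) : Prop :=
  ∀ f : ↥Hinf, ∀ z : ↥RHP,
    (T f).1 z = (1 + z.1) ^ (-(2 * β)) * f.1 ⟨z.1 / (1 + z.1), mem_div z⟩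

/-- Pointwise characterisation of the transfer operator `(L↓ f)(z) = f(1+z)` on `H^∞(Π)`. -/
def IsLdn (T : ↥Hinf →L[ℂ] ↥Hinf) : Prop :=
  ∀ f : ↥Hinf, ∀ z : ↥RHP, (T f).1 z = f.1 ⟨1 + z.1, mem_shift z⟩

/-- The cluster operator `M_{T,τ} = τ T (1 - τ T)⁻¹`, via `Ring.inverse` (which agrees
with the genuine inverse whenever `1 - τ T` is invertible). -/
noncomputable def Mop (T : ↥Hinf →L[ℂ] ↥Hinf) (τ : ℂ) : ↥Hinf →L[ℂ] ↥Hinf :=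
  (τ • T) * Ring.inverse (1 - τ • T)

/-- `z = 0` is allowed: then `z⁻¹ = 0` and `1 - 0 • a = 1`. -/
lemma isUnit_one_sub_smul_of_inv_notMem_spectrum {𝕜 A : Type*} [Field 𝕜] [Ring A]
    [Algebra 𝕜 A] {z : 𝕜} {a : A} (hz : z⁻¹ ∉ spectrum 𝕜 a) : IsUnit (1 - z • a) := by
  rcases eq_or_ne z 0 with rfl | hz0
  · simp
  · have hunit : IsUnit (algebraMap 𝕜 A z⁻¹ - a) := spectrum.notMem_iff.mp hz
    have hscale : 1 - z • a = algebraMap 𝕜 A z * (algebraMap 𝕜 A z⁻¹ - a) := by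
      rw [mul_sub, ← map_mul, mul_inv_cancel₀ hz0, map_one, ← Algebra.smul_def]
    rw [hscale]
    exact ((isUnit_iff_ne_zero.mpr hz0).map (algebraMap 𝕜 A)).mul hunit

/-- With `P = B (1 - B)⁻¹` and `Q = A (1 - A)⁻¹`, the cross term of the product is
`(1 - B) P Q (1 - A) = B A`, which is exactly what `(1 - B)(1 - A)` overcounts. -/
lemma one_sub_add_eq_mul_one_sub_mul_mul {R : Type*} [Ring R] {A B : R}
    (hA : IsUnit (1 - A)) (hB : IsUnit (1 - B)) :
    1 - (A + B)
      = (1 - B) * (1 - B * Ring.inverse (1 - B) * (A * Ring.inverse (1 - A))) * (1 - A) := by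
  have hBP : (1 - B) * (B * Ring.inverse (1 - B)) = B := by
    rw [← mul_assoc, show (1 - B) * B = B * (1 - B) by noncomm_ring, mul_assoc,
      Ring.mul_inverse_cancel _ hB, mul_one]
  have hQA : A * Ring.inverse (1 - A) * (1 - A) = A := by
    rw [mul_assoc, Ring.inverse_mul_cancel _ hA, mul_one]
  calc 1 - (A + B) = (1 - B) * (1 - A) - B * A := by noncomm_ring
    _ = (1 - B) * (1 - A) - (1 - B) * (B * Ring.inverse (1 - B))
          * (A * Ring.inverse (1 - A) * (1 - A)) := by rw [hBP, hQA]
    _ = _ := by noncomm_ring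

theorem cluster_operator_factorisation_general (β h z : ℂ)
    (Lup Ldn : ↥Hinf →L[ℂ] ↥Hinf)
    (hz1 : z⁻¹ ∉ spectrum ℂ (Complex.exp (-(β * h)) • Lup))
    (hz2 : z⁻¹ ∉ spectrum ℂ (Complex.exp (β * h) • Ldn)) :
    1 - z • (Complex.exp (-(β * h)) • Lup + Complex.exp (β * h) • Ldn)
      = (1 - (z * Complex.exp (β * h)) • Ldn)
          * (1 - Mop Ldn (z * Complex.exp (β * h)) * Mop Lup (z * Complex.exp (-(β * h))))
          * (1 - (z * Complex.exp (-(β * h))) • Lup) := by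
  have hunit_up := isUnit_one_sub_smul_of_inv_notMem_spectrum hz1
  have hunit_dn := isUnit_one_sub_smul_of_inv_notMem_spectrum hz2
  rw [smul_smul] at hunit_up hunit_dn
  have hsum : z • (Complex.exp (-(β * h)) • Lup + Complex.exp (β * h) • Ldn)
      = (z * Complex.exp (-(β * h))) • Lup + (z * Complex.exp (β * h)) • Ldn := by
    module
  rw [hsum]
  exact one_sub_add_eq_mul_one_sub_mul_mul hunit_up hunit_dn

/-- (Lemma 1, Eq. (21)): the factorisation
`1 - zL_{β,h} = [1 - ze^{βh}L↓_β][1 - M↓_{β,ze^{βh}}M↑_{β,ze^{-βh}}][1 - ze^{-βh}L↑_β]`. -/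
theorem cluster_operator_factorisation (β h z : ℂ) (hβ : 0 ≤ β.re)
    (Lup Ldn : ↥Hinf →L[ℂ] ↥Hinf) (hup : IsLup β Lup) (hdn : IsLdn Ldn)
    (hz1 : z⁻¹ ∉ spectrum ℂ (Complex.exp (-(β * h)) • Lup))
    (hz2 : z⁻¹ ∉ spectrum ℂ (Complex.exp (β * h) • Ldn)) :
    1 - z • (Complex.exp (-(β * h)) • Lup + Complex.exp (β * h) • Ldn)
      = (1 - (z * Complex.exp (β * h)) • Ldn)
          * (1 - Mop Ldn (z * Complex.exp (β * h)) * Mop Lup (z * Complex.exp (-(β * h))))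
          * (1 - (z * Complex.exp (-(β * h))) • Lup) :=
  cluster_operator_factorisation_general β h z Lup Ldn hz1 hz2
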